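/- arXiv:2304.02230 — 2 statements merged into one kernel-verified Lean document; each statement's English description precedes it below -/
import Mathlib

section
/- Let m ≥ 4 be even and Γ = K_{m−2} ⊔ (m/2)·K_2. Then M1(Γ) = (m−2)(m−3)^2 + m, M2(Γ) = ((m−2)(m−3)^3 + m)/2, and M2(Γ)/|e(Γ)| ≥ M1(Γ)/|v(Γ)|, with equality if and only if m = 4. -/
open Finset

/-- First Zagreb index: sum of squared degrees. -/
def zagrebM1 (V : Type*) [Fintype V] (G : SimpleGraph V) [DecidableRel G.Adj] : ℕ :=
  ∑ v, G.degree v ^ 2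

/-- Second Zagreb index: sum over edges of the product of endpoint degrees. -/
def zagrebM2 (V : Type*) [Fintype V] (G : SimpleGraph V) [DecidableRel G.Adj] : ℕ :=
  ∑ e ∈ G.edgeFinset,
    Sym2.lift ⟨fun u v => G.degree u * G.degree v, fun u v => mul_comm _ _⟩ e

/-- Disjoint union of complete graphs of sizes `m i`, one for each `i : ι`. -/
def cliqueUnion {ι : Type*} (m : ι → ℕ) : SimpleGraph (Σ i, Fin (m i)) where
  Adj x y := x.1 = y.1 ∧ x ≠ y
  symm := ⟨fun _ _ h => ⟨h.1.symm, h.2.symm⟩⟩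
  loopless := ⟨fun _ h => h.2 rfl⟩

instance cliqueUnion.adjDecidable {ι : Type*} [DecidableEq ι] (m : ι → ℕ) :
    DecidableRel (cliqueUnion m).Adj :=
  fun x y => inferInstanceAs (Decidable (x.1 = y.1 ∧ x ≠ y))

abbrev DEvenV (m : ℕ) : Type :=
  Σ i : Unit ⊕ Fin (m / 2), Fin (Sum.elim (fun _ : Unit => m - 2) (fun _ : Fin (m / 2) => 2) i)

abbrev DEvenG (m : ℕ) : SimpleGraph (DEvenV m) :=
  cliqueUnion (Sum.elim (fun _ : Unit => m - 2) (fun _ : Fin (m / 2) => 2))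

section Aux

variable {V : Type*} [Fintype V]

open SimpleGraph in
/-- Summing an edge-function over darts double counts the edge sum. -/
lemma aux_sum_dart_edge (G : SimpleGraph V) [DecidableRel G.Adj] (f : Sym2 V → ℕ) :
    ∑ d : G.Dart, f d.edge = 2 * ∑ e ∈ G.edgeFinset, f e := by
  classical
  rw [← Finset.sum_fiberwise_of_maps_to (g := Dart.edge) (t := G.edgeFinset)
    (fun d _ => by simp) (fun d => f d.edge), Finset.mul_sum]
  refine Finset.sum_congr rfl fun e he => ?_
  have h2 : #{d : G.Dart | d.edge = e} = 2 :=
    G.dart_edge_fiber_card e (SimpleGraph.mem_edgeFinset.mp he)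
  calc ∑ d ∈ {d : G.Dart | d.edge = e}, f d.edge
      = ∑ d ∈ {d : G.Dart | d.edge = e}, f e := by
        refine Finset.sum_congr rfl fun d hd => ?_
        rw [Finset.mem_filter] at hd
        rw [hd.2]
    _ = 2 * f e := by rw [Finset.sum_const, h2, smul_eq_mul]

open SimpleGraph in
lemma aux_sum_dart_fst (G : SimpleGraph V) [DecidableRel G.Adj] (f : V → ℕ) :
    ∑ d : G.Dart, f d.fst = ∑ v, G.degree v * f v := by
  classical
  rw [← Finset.sum_fiberwise_of_maps_to (g := fun d : G.Dart => d.fst) (t := Finset.univ)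
    (fun d _ => Finset.mem_univ _) (fun d => f d.fst)]
  refine Finset.sum_congr rfl fun v _ => ?_
  calc ∑ d ∈ {d : G.Dart | d.fst = v}, f d.fst
      = ∑ d ∈ {d : G.Dart | d.fst = v}, f v := by
        refine Finset.sum_congr rfl fun d hd => ?_
        rw [Finset.mem_filter] at hd
        rw [hd.2]
    _ = G.degree v * f v := by
        rw [Finset.sum_const, G.dart_fst_fiber_card_eq_degree, smul_eq_mul]

lemma cliqueUnion_degree {ι : Type*} [Fintype ι] [DecidableEq ι] (m : ι → ℕ) (i : ι) (a : Fin (m i)) :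
    (cliqueUnion m).degree ⟨i, a⟩ = m i - 1 := by
  classical
  rw [← SimpleGraph.card_neighborFinset_eq_degree]
  have hset : (cliqueUnion m).neighborFinset ⟨i, a⟩ =
      (Finset.univ.map ⟨Sigma.mk i, sigma_mk_injective⟩).erase ⟨i, a⟩ := by
    ext y
    obtain ⟨j, b⟩ := y
    rw [SimpleGraph.mem_neighborFinset]
    simp only [SimpleGraph.mem_neighborFinset, cliqueUnion, Finset.mem_erase,
      Finset.mem_map, Finset.mem_univ, Function.Embedding.coeFn_mk, true_and, ne_eq]
    constructor
    · rintro ⟨rfl, h⟩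
      exact ⟨fun hh => h hh.symm, b, rfl⟩
    · rintro ⟨h, c, hc⟩
      obtain ⟨rfl, _⟩ := Sigma.mk.inj_iff.mp hc
      exact ⟨rfl, fun hh => h hh.symm⟩
  rw [hset, Finset.card_erase_of_mem (by simp), Finset.card_map, Finset.card_univ,
    Fintype.card_fin]

lemma cliqueUnion_degree_eq_of_adj {ι : Type*} [Fintype ι] [DecidableEq ι] (m : ι → ℕ)
    {u v : Σ i, Fin (m i)} (h : (cliqueUnion m).Adj u v) :
    (cliqueUnion m).degree u = (cliqueUnion m).degree v := by
  obtain ⟨i, a⟩ := u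
  obtain ⟨j, b⟩ := v
  obtain ⟨rfl, -⟩ := h
  rw [cliqueUnion_degree, cliqueUnion_degree]

lemma DEven_sum_pow (m k : ℕ) :
    ∑ v : DEvenV m, (DEvenG m).degree v ^ k = (m - 2) * (m - 3) ^ k + m / 2 * 2 := by
  rw [← Finset.univ_sigma_univ, Finset.sum_sigma]
  have hdeg : ∀ (i : Unit ⊕ Fin (m / 2))
      (a : Fin (Sum.elim (fun _ : Unit => m - 2) (fun _ : Fin (m / 2) => 2) i)),
      (DEvenG m).degree ⟨i, a⟩ =
        Sum.elim (fun _ : Unit => m - 2) (fun _ : Fin (m / 2) => 2) i - 1 :=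
    fun i a => cliqueUnion_degree _ i a
  calc ∑ i : Unit ⊕ Fin (m / 2), ∑ a, (DEvenG m).degree ⟨i, a⟩ ^ k
      = ∑ i : Unit ⊕ Fin (m / 2),
          (Sum.elim (fun _ : Unit => m - 2) (fun _ : Fin (m / 2) => 2) i) *
          ((Sum.elim (fun _ : Unit => m - 2) (fun _ : Fin (m / 2) => 2) i - 1) ^ k) := by
        refine Finset.sum_congr rfl fun i _ => ?_
        rw [Finset.sum_congr rfl fun a _ => by rw [hdeg i a]]
        rw [Finset.sum_const, Finset.card_univ, Fintype.card_fin, smul_eq_mul]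
    _ = (m - 2) * (m - 3) ^ k + m / 2 * 2 := by
        rw [Fintype.sum_sum_type]
        have h1 : m - 2 - 1 = m - 3 := by omega
        simp only [Sum.elim_inl, Sum.elim_inr, Finset.sum_const, Finset.card_univ,
          Fintype.card_fin, Fintype.card_unit, smul_eq_mul, one_mul, h1]
        norm_num

lemma DEven_two_mul_M2 (m : ℕ) :
    2 * zagrebM2 (DEvenV m) (DEvenG m) = ∑ v : DEvenV m, (DEvenG m).degree v ^ 3 := by
  classical
  rw [zagrebM2, ← aux_sum_dart_edge]
  have h1 : ∀ d : (DEvenG m).Dart,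
      Sym2.lift ⟨fun u v => (DEvenG m).degree u * (DEvenG m).degree v,
        fun u v => mul_comm _ _⟩ d.edge = (DEvenG m).degree d.fst ^ 2 := by
    intro d
    have := cliqueUnion_degree_eq_of_adj _ d.adj
    rw [SimpleGraph.Dart.edge, Sym2.lift_mk]
    show (DEvenG m).degree d.toProd.1 * (DEvenG m).degree d.toProd.2 = _
    rw [← this, sq]
  rw [Finset.sum_congr rfl fun d _ => h1 d]
  rw [aux_sum_dart_fst (DEvenG m) (fun v => (DEvenG m).degree v ^ 2)]
  refine Finset.sum_congr rfl fun v _ => ?_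
  ring

end Aux

theorem zagreb_commuting_dihedral_even (m : ℕ) (hm : 4 ≤ m) (heven : Even m) :
    (zagrebM1 (DEvenV m) (DEvenG m) : ℚ) = ((m : ℚ) - 2) * ((m : ℚ) - 3) ^ 2 + m ∧
    (zagrebM2 (DEvenV m) (DEvenG m) : ℚ) = (((m : ℚ) - 2) * ((m : ℚ) - 3) ^ 3 + m) / 2 ∧
    (zagrebM2 (DEvenV m) (DEvenG m) : ℚ) / ((DEvenG m).edgeFinset.card : ℚ)
      ≥ (zagrebM1 (DEvenV m) (DEvenG m) : ℚ) / (Fintype.card (DEvenV m) : ℚ) ∧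
    ((zagrebM2 (DEvenV m) (DEvenG m) : ℚ) / ((DEvenG m).edgeFinset.card : ℚ)
      = (zagrebM1 (DEvenV m) (DEvenG m) : ℚ) / (Fintype.card (DEvenV m) : ℚ) ↔ m = 4) := by
  have hhalf : m / 2 * 2 = m := Nat.div_mul_cancel heven.two_dvd
  -- natural-number computations
  have hS : ∀ k, ∑ v : DEvenV m, (DEvenG m).degree v ^ k = (m - 2) * (m - 3) ^ k + m := by
    intro k; rw [DEven_sum_pow, hhalf]
  set x : ℚ := (m : ℚ) with hx
  have hx4 : (4 : ℚ) ≤ x := by rw [hx]; exact_mod_cast hm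
  have hcast : ∀ k, ((∑ v : DEvenV m, (DEvenG m).degree v ^ k : ℕ) : ℚ)
      = (x - 2) * (x - 3) ^ k + x := by
    intro k
    rw [hS k]
    push_cast [Nat.cast_sub (by omega : 2 ≤ m), Nat.cast_sub (by omega : 3 ≤ m)]
    ring
  -- M1
  have hM1 : (zagrebM1 (DEvenV m) (DEvenG m) : ℚ) = (x - 2) * (x - 3) ^ 2 + x := by
    rw [zagrebM1]; exact_mod_cast hcast 2
  -- M2
  have hM2 : (zagrebM2 (DEvenV m) (DEvenG m) : ℚ) = ((x - 2) * (x - 3) ^ 3 + x) / 2 := by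
    have h2 : ((2 * zagrebM2 (DEvenV m) (DEvenG m) : ℕ) : ℚ) = (x - 2) * (x - 3) ^ 3 + x := by
      rw [DEven_two_mul_M2]; exact_mod_cast hcast 3
    push_cast at h2
    linarith
  -- edge count
  have hE : ((DEvenG m).edgeFinset.card : ℚ) = ((x - 2) * (x - 3) + x) / 2 := by
    have h2 : ((2 * (DEvenG m).edgeFinset.card : ℕ) : ℚ) = (x - 2) * (x - 3) + x := by
      rw [← SimpleGraph.sum_degrees_eq_twice_card_edges]
      calc ((∑ v : DEvenV m, (DEvenG m).degree v : ℕ) : ℚ)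
          = ((∑ v : DEvenV m, (DEvenG m).degree v ^ 1 : ℕ) : ℚ) := by simp
        _ = (x - 2) * (x - 3) ^ 1 + x := hcast 1
        _ = (x - 2) * (x - 3) + x := by ring
    push_cast at h2
    linarith
  -- vertex count
  have hV : (Fintype.card (DEvenV m) : ℚ) = 2 * x - 2 := by
    have : Fintype.card (DEvenV m) = (m - 2) + m := by
      rw [Fintype.card_sigma, Fintype.sum_sum_type]
      simp only [Fintype.card_fin]
      simp only [Sum.elim_inl, Sum.elim_inr, Fintype.card_fin]
      simp only [Finset.sum_const, Finset.card_univ, Fintype.card_fin, Fintype.card_unit,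
        smul_eq_mul, one_mul]
      omega
    rw [this]
    push_cast [Nat.cast_sub (by omega : 2 ≤ m)]
    ring
  have hEpos : (0 : ℚ) < ((x - 2) * (x - 3) + x) / 2 := by nlinarith
  have hVpos : (0 : ℚ) < 2 * x - 2 := by nlinarith
  refine ⟨hM1, hM2, ?_, ?_⟩
  · rw [hM1, hM2, hE, hV, ge_iff_le, div_le_div_iff₀ hVpos hEpos]
    nlinarith [sq_nonneg (x - 4), sq_nonneg (x - 2), sq_nonneg ((x - 4) * (x - 2)),
      mul_nonneg (mul_nonneg (by linarith : (0:ℚ) ≤ x) (sq_nonneg (x - 4))) (sq_nonneg (x - 2))]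
  · rw [hM1, hM2, hE, hV, div_eq_div_iff hEpos.ne' hVpos.ne']
    constructor
    · intro h
      have hq : x * ((x - 4) ^ 2 * (x - 2) ^ 2) = 0 := by nlinarith
      have hxpos : (0 : ℚ) < x := by linarith
      have h2 : (x - 4) ^ 2 * (x - 2) ^ 2 = 0 := by
        rcases mul_eq_zero.mp hq with h | h
        · exact absurd h (ne_of_gt hxpos)
        · exact h
      have : x = 4 := by
        rcases mul_eq_zero.mp h2 with h | h
        · have := pow_eq_zero_iff (n := 2) (by norm_num) |>.mp h
          linarith
        · have := pow_eq_zero_iff (n := 2) (by norm_num) |>.mp h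
          linarith
      rw [hx] at this
      exact_mod_cast this
    · intro h
      subst h
      norm_num [hx]
end

section
/- Let m ≥ 4 be even and let Γ be the complement of K_{m−2} ⊔ (m/2)·K_2 on 2m−2 vertices. Then M1(Γ) = 5m^3 − 18m^2 + 16m, M2(Γ) = 4m^4 − 20m^3 + 32m^2 − 16m, |e(Γ)| = 3m(m−2)/2, and M2(Γ)/|e(Γ)| ≥ M1(Γ)/|v(Γ)|, with equality if and only if m = 4. -/
open Finset

open SimpleGraph in
lemma DEven_adj' (m : ℕ) (x y : DEvenV m) : (DEvenG m)ᶜ.Adj x y ↔ x.1 ≠ y.1 := by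
  constructor
  · rintro ⟨hne, h⟩ h1
    exact h ⟨h1, hne⟩
  · intro h
    exact ⟨fun e => h (congrArg Sigma.fst e), fun h2 => h h2.1⟩

lemma DEven_fiber_sum (m : ℕ) (i : Unit ⊕ Fin (m/2)) (g : (Unit ⊕ Fin (m/2)) → ℕ) :
    ∑ y ∈ univ.filter (fun y : DEvenV m => y.1 = i), g y.1
      = (Sum.elim (fun _ : Unit => m - 2) (fun _ : Fin (m/2) => 2) i) * g i := by
  rw [Finset.sum_filter, ← Finset.univ_sigma_univ, Finset.sum_sigma]
  simp [Finset.sum_ite_eq', mul_comm]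

lemma DEven_sum_fst (m : ℕ) (g : (Unit ⊕ Fin (m/2)) → ℕ) :
    ∑ y : DEvenV m, g y.1
      = (m - 2) * g (Sum.inl ()) + ∑ k : Fin (m/2), 2 * g (Sum.inr k) := by
  rw [← Finset.univ_sigma_univ, Finset.sum_sigma, Fintype.sum_sum_type]
  simp [mul_comm]
  congr 1
  · exact congrArg (· * _) (Finset.card_fin _)

lemma DEven_nbrFinset (m : ℕ) (x : DEvenV m) :
    (DEvenG m)ᶜ.neighborFinset x = univ.filter (fun y : DEvenV m => ¬ (y.1 = x.1)) := by
  ext y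
  simp only [SimpleGraph.mem_neighborFinset, DEven_adj', mem_filter, mem_univ, true_and]
  exact ⟨fun h h2 => h h2.symm, fun h h2 => h h2.symm⟩

lemma DEven_nbr_sum (m : ℕ) (x : DEvenV m) (g : (Unit ⊕ Fin (m/2)) → ℕ) :
    (∑ w ∈ (DEvenG m)ᶜ.neighborFinset x, g w.1)
      + (Sum.elim (fun _ : Unit => m - 2) (fun _ : Fin (m/2) => 2) x.1) * g x.1
      = ∑ y : DEvenV m, g y.1 := by
  rw [DEven_nbrFinset, ← DEven_fiber_sum m x.1 g]
  rw [← Finset.sum_filter_add_sum_filter_not univ (fun y : DEvenV m => y.1 = x.1) (fun y => g y.1)]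
  ring

lemma sum_edge_lift {V : Type*} [Fintype V] [DecidableEq V] (G : SimpleGraph V)
    [DecidableRel G.Adj] (f : V → V → ℕ) (hf : ∀ u v, f u v = f v u) :
    2 * ∑ e ∈ G.edgeFinset, Sym2.lift ⟨f, hf⟩ e = ∑ d : G.Dart, f d.fst d.snd := by
  have h1 : ∑ d : G.Dart, f d.fst d.snd
      = ∑ e ∈ G.edgeFinset, ∑ d ∈ univ.filter (fun d : G.Dart => d.edge = e), f d.fst d.snd :=
    (Finset.sum_fiberwise_of_maps_to (fun d _ => by simp [SimpleGraph.Dart.edge_mem]) _).symm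
  rw [h1, Finset.mul_sum]
  refine Finset.sum_congr rfl fun e he => ?_
  have h2 : ∀ d ∈ univ.filter (fun d : G.Dart => d.edge = e),
      f d.fst d.snd = Sym2.lift ⟨f, hf⟩ e := by
    intro d hd
    have hde := (Finset.mem_filter.mp hd).2
    rw [← hde]
    rfl
  rw [Finset.sum_congr rfl h2, Finset.sum_const,
    G.dart_edge_fiber_card e (SimpleGraph.mem_edgeFinset.mp he), smul_eq_mul]

lemma sum_dart_eq {V : Type*} [Fintype V] [DecidableEq V] (G : SimpleGraph V)
    [DecidableRel G.Adj] (f : V → V → ℕ) :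
    ∑ d : G.Dart, f d.fst d.snd = ∑ v, ∑ w ∈ G.neighborFinset v, f v w := by
  rw [← Finset.sum_fiberwise_of_maps_to (fun d _ => Finset.mem_univ d.fst)
      (fun d : G.Dart => f d.fst d.snd)]
  refine Finset.sum_congr rfl fun v _ => ?_
  rw [show (univ.filter fun d : G.Dart => d.fst = v)
      = ({d : G.Dart | d.fst = v} : Finset _) from rfl,
    SimpleGraph.dart_fst_fiber,
    Finset.sum_image (fun x _ y _ h => G.dartOfNeighborSet_injective v h)]
  rw [show (G.neighborFinset v) = (G.neighborSet v).toFinset from rfl, ← Finset.sum_set_coe]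
  rfl

lemma DEven_card' (b : ℕ) : Fintype.card (DEvenV (2*b+2)) = 4*b+2 := by
  rw [Fintype.card_sigma, Fintype.sum_sum_type]
  simp [show (2*b+2) - 2 = 2*b from by omega, show (2*b+2)/2 = b+1 from by omega]
  omega

lemma DEven_deg' (b : ℕ) : ∀ x : DEvenV (2*b+2), (DEvenG (2*b+2))ᶜ.degree x
    = Sum.elim (fun _ : Unit => 2*b+2) (fun _ : Fin ((2*b+2)/2) => 4*b) x.1 := by
  intro x
  have h := DEven_nbr_sum (2*b+2) x (fun _ => 1)
  simp only [Finset.sum_const, smul_eq_mul, mul_one, Finset.card_univ,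
    SimpleGraph.card_neighborFinset_eq_degree] at h
  rw [DEven_card'] at h
  obtain ⟨i, j⟩ := x
  cases i <;> simp_all <;> omega

lemma DEven_T' (b : ℕ) : ∑ y : DEvenV (2*b+2),
    (Sum.elim (fun _ : Unit => 2*b+2) (fun _ : Fin ((2*b+2)/2) => 4*b) y.1)
    = 12*b^2 + 12*b := by
  rw [DEven_sum_fst]
  simp only [Sum.elim_inl, Sum.elim_inr, Finset.sum_const, Finset.card_univ,
    Fintype.card_fin, smul_eq_mul, show (2*b+2) - 2 = 2*b from by omega,
    show (2*b+2)/2 = b+1 from by omega]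
  ring

lemma DEven_E' (b : ℕ) : 2 * (DEvenG (2*b+2))ᶜ.edgeFinset.card = 12*b^2 + 12*b := by
  rw [← SimpleGraph.sum_degrees_eq_twice_card_edges, ← DEven_T' b]
  exact Finset.sum_congr rfl fun v _ => DEven_deg' b v

lemma DEven_M1' (b : ℕ) : zagrebM1 (DEvenV (2*b+2)) (DEvenG (2*b+2))ᶜ
    = 2*b*(2*b+2)^2 + (b+1)*(2*(4*b)^2) := by
  unfold zagrebM1
  rw [show ∑ v : DEvenV (2*b+2), (DEvenG (2*b+2))ᶜ.degree v ^ 2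
      = ∑ v : DEvenV (2*b+2),
        (Sum.elim (fun _ : Unit => 2*b+2) (fun _ : Fin ((2*b+2)/2) => 4*b) v.1)^2
      from Finset.sum_congr rfl fun v _ => by rw [DEven_deg' b v],
    DEven_sum_fst (2*b+2)
      (fun i => (Sum.elim (fun _ : Unit => 2*b+2) (fun _ : Fin ((2*b+2)/2) => 4*b) i)^2)]
  simp only [Sum.elim_inl, Sum.elim_inr, Finset.sum_const, Finset.card_univ,
    Fintype.card_fin, smul_eq_mul, show (2*b+2) - 2 = 2*b from by omega,
    show (2*b+2)/2 = b+1 from by omega]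
  try ring

lemma DEven_S' (b : ℕ) : ∀ x : DEvenV (2*b+2),
    ∑ w ∈ (DEvenG (2*b+2))ᶜ.neighborFinset x, (DEvenG (2*b+2))ᶜ.degree w
    = Sum.elim (fun _ : Unit => 8*b^2+8*b) (fun _ : Fin ((2*b+2)/2) => 12*b^2+4*b) x.1 := by
  intro x
  have h := DEven_nbr_sum (2*b+2) x
    (fun i => Sum.elim (fun _ : Unit => 2*b+2) (fun _ : Fin ((2*b+2)/2) => 4*b) i)
  rw [DEven_T'] at h
  rw [show ∑ w ∈ (DEvenG (2*b+2))ᶜ.neighborFinset x, (DEvenG (2*b+2))ᶜ.degree w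
      = ∑ w ∈ (DEvenG (2*b+2))ᶜ.neighborFinset x,
        Sum.elim (fun _ : Unit => 2*b+2) (fun _ : Fin ((2*b+2)/2) => 4*b) w.1
      from Finset.sum_congr rfl fun w _ => by rw [DEven_deg' b w]]
  obtain ⟨i, j⟩ := x
  cases i <;> simp only [Sum.elim_inl, Sum.elim_inr,
      show (2*b+2) - 2 = 2*b from by omega] at h ⊢ <;>
    ring_nf at h ⊢ <;> omega

lemma DEven_M2' (b : ℕ) : 2 * zagrebM2 (DEvenV (2*b+2)) (DEvenG (2*b+2))ᶜ
    = 2*b*((2*b+2)*(8*b^2+8*b)) + (b+1)*(2*(4*b*(12*b^2+4*b))) := by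
  unfold zagrebM2
  rw [sum_edge_lift, sum_dart_eq (DEvenG (2*b+2))ᶜ
    (fun u w => (DEvenG (2*b+2))ᶜ.degree u * (DEvenG (2*b+2))ᶜ.degree w)]
  have e2 : ∀ v : DEvenV (2*b+2),
      ∑ w ∈ (DEvenG (2*b+2))ᶜ.neighborFinset v,
        (DEvenG (2*b+2))ᶜ.degree v * (DEvenG (2*b+2))ᶜ.degree w
      = Sum.elim (fun _ : Unit => (2*b+2)*(8*b^2+8*b))
          (fun _ : Fin ((2*b+2)/2) => 4*b*(12*b^2+4*b)) v.1 := by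
    intro v
    rw [← Finset.mul_sum, DEven_S' b v, DEven_deg' b v]
    obtain ⟨i, j⟩ := v
    cases i <;> rfl
  rw [Finset.sum_congr rfl (fun v _ => e2 v),
    DEven_sum_fst (2*b+2) (fun i => Sum.elim (fun _ : Unit => (2*b+2)*(8*b^2+8*b))
      (fun _ : Fin ((2*b+2)/2) => 4*b*(12*b^2+4*b)) i)]
  simp only [Sum.elim_inl, Sum.elim_inr, Finset.sum_const, Finset.card_univ,
    Fintype.card_fin, smul_eq_mul, show (2*b+2) - 2 = 2*b from by omega,
    show (2*b+2)/2 = b+1 from by omega]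
  try ring

lemma DEven_m1q (b : ℕ) : (zagrebM1 (DEvenV (2*b+2)) (DEvenG (2*b+2))ᶜ : ℚ)
    = 5 * ((2*b+2 : ℕ) : ℚ)^3 - 18 * ((2*b+2 : ℕ) : ℚ)^2 + 16 * ((2*b+2 : ℕ) : ℚ) := by
  rw [DEven_M1']; push_cast; ring

lemma DEven_m2q (b : ℕ) : (zagrebM2 (DEvenV (2*b+2)) (DEvenG (2*b+2))ᶜ : ℚ)
    = 4 * ((2*b+2 : ℕ) : ℚ)^4 - 20 * ((2*b+2 : ℕ) : ℚ)^3 + 32 * ((2*b+2 : ℕ) : ℚ)^2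
      - 16 * ((2*b+2 : ℕ) : ℚ) := by
  have h := congrArg (fun n : ℕ => (n : ℚ)) (DEven_M2' b)
  push_cast at h
  push_cast
  linear_combination h / 2

lemma DEven_eq' (b : ℕ) : (((DEvenG (2*b+2))ᶜ.edgeFinset.card : ℕ) : ℚ)
    = 3 * ((2*b+2 : ℕ) : ℚ) * (((2*b+2 : ℕ) : ℚ) - 2) / 2 := by
  have h := congrArg (fun n : ℕ => (n : ℚ)) (DEven_E' b)
  push_cast at h
  push_cast
  linear_combination h / 2

lemma DEven_key (b : ℕ) (hb : 1 ≤ b) :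
    (zagrebM2 (DEvenV (2*b+2)) (DEvenG (2*b+2))ᶜ : ℚ)
        / (((DEvenG (2*b+2))ᶜ.edgeFinset.card : ℕ) : ℚ)
      - (zagrebM1 (DEvenV (2*b+2)) (DEvenG (2*b+2))ᶜ : ℚ)
        / ((Fintype.card (DEvenV (2*b+2)) : ℕ) : ℚ)
      = 4*(b:ℚ)*((b:ℚ)-1)^2 / (3*(2*(b:ℚ)+1)) := by
  have hBpos : (0:ℚ) < (b:ℚ) := by exact_mod_cast Nat.lt_of_lt_of_le Nat.zero_lt_one hb
  have hnq : ((Fintype.card (DEvenV (2*b+2)) : ℕ) : ℚ) = 4*(b:ℚ)+2 := by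
    rw [DEven_card']; push_cast; ring
  rw [DEven_m2q, DEven_m1q, DEven_eq', hnq]
  have h1 : ((2*b+2 : ℕ) : ℚ) = 2*(b:ℚ)+2 := by push_cast; ring
  rw [h1, show 3 * (2*(b:ℚ)+2) * ((2*(b:ℚ)+2) - 2) / 2 = 6*(b:ℚ)*((b:ℚ)+1) from by ring]
  have hd1 : 6*(b:ℚ)*((b:ℚ)+1) ≠ 0 := ne_of_gt (by nlinarith [hBpos])
  have hd2' : 4*(b:ℚ)+2 ≠ 0 := by positivity
  have hd3 : 3*(2*(b:ℚ)+1) ≠ 0 := by positivity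
  field_simp
  ring

lemma DEven_ge (b : ℕ) (hb : 1 ≤ b) :
    (zagrebM2 (DEvenV (2*b+2)) (DEvenG (2*b+2))ᶜ : ℚ)
        / (((DEvenG (2*b+2))ᶜ.edgeFinset.card : ℕ) : ℚ)
      ≥ (zagrebM1 (DEvenV (2*b+2)) (DEvenG (2*b+2))ᶜ : ℚ)
        / ((Fintype.card (DEvenV (2*b+2)) : ℕ) : ℚ) := by
  have h0 : (0:ℚ) ≤ 4*(b:ℚ)*((b:ℚ)-1)^2 / (3*(2*(b:ℚ)+1)) := by positivity
  linarith [DEven_key b hb]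

lemma DEven_iff (b : ℕ) (hb : 1 ≤ b) :
    ((zagrebM2 (DEvenV (2*b+2)) (DEvenG (2*b+2))ᶜ : ℚ)
        / (((DEvenG (2*b+2))ᶜ.edgeFinset.card : ℕ) : ℚ)
      = (zagrebM1 (DEvenV (2*b+2)) (DEvenG (2*b+2))ᶜ : ℚ)
        / ((Fintype.card (DEvenV (2*b+2)) : ℕ) : ℚ)) ↔ 2*b+2 = 4 := by
  constructor
  · intro h
    have h0 : 4*(b:ℚ)*((b:ℚ)-1)^2 / (3*(2*(b:ℚ)+1)) = 0 := by
      rw [← DEven_key b hb, h]; ring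
    have hd3 : 3*(2*(b:ℚ)+1) ≠ 0 := by positivity
    have hnum : 4*(b:ℚ)*((b:ℚ)-1)^2 = 0 := by
      rcases (div_eq_zero_iff.mp h0) with h1 | h1
      · exact h1
      · exact absurd h1 hd3
    by_contra hne
    have h2 : 2 ≤ b := by omega
    have h2' : (2:ℚ) ≤ (b:ℚ) := by exact_mod_cast h2
    nlinarith [hnum]
  · intro h
    have hb1 : (b:ℚ) = 1 := by
      rw [show b = 1 from by omega]; norm_num
    have h0 : 4*(b:ℚ)*((b:ℚ)-1)^2 / (3*(2*(b:ℚ)+1)) = 0 := by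
      rw [hb1]; norm_num
    linarith [DEven_key b hb, h0]

theorem zagreb_noncommuting_dihedral_even (m : ℕ) (hm : 4 ≤ m) (heven : Even m) :
    (zagrebM1 (DEvenV m) (DEvenG m)ᶜ : ℚ)
      = 5 * (m : ℚ) ^ 3 - 18 * (m : ℚ) ^ 2 + 16 * (m : ℚ) ∧
    (zagrebM2 (DEvenV m) (DEvenG m)ᶜ : ℚ)
      = 4 * (m : ℚ) ^ 4 - 20 * (m : ℚ) ^ 3 + 32 * (m : ℚ) ^ 2 - 16 * (m : ℚ) ∧
    (((DEvenG m)ᶜ.edgeFinset.card : ℚ)) = 3 * (m : ℚ) * ((m : ℚ) - 2) / 2 ∧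
    (zagrebM2 (DEvenV m) (DEvenG m)ᶜ : ℚ) / (((DEvenG m)ᶜ.edgeFinset.card : ℚ))
      ≥ (zagrebM1 (DEvenV m) (DEvenG m)ᶜ : ℚ) / (Fintype.card (DEvenV m) : ℚ) ∧
    ((zagrebM2 (DEvenV m) (DEvenG m)ᶜ : ℚ) / (((DEvenG m)ᶜ.edgeFinset.card : ℚ))
      = (zagrebM1 (DEvenV m) (DEvenG m)ᶜ : ℚ) / (Fintype.card (DEvenV m) : ℚ) ↔ m = 4) := by
  obtain ⟨b, rfl⟩ : ∃ b, m = 2*b+2 := by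
    obtain ⟨k, hk⟩ := heven
    exact ⟨k-1, by omega⟩
  have hb : 1 ≤ b := by omega
  exact ⟨DEven_m1q b, DEven_m2q b, DEven_eq' b, DEven_ge b hb, DEven_iff b hb⟩
end
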